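/- arXiv:1607.04078 — 2 statements merged into one kernel-verified Lean document; each statement's English description precedes it below -/
import Mathlib

section
/- Let 𝒰 ⊆ ℤⁿ be a set of primitive integer vectors containing the standard basis e₁,…,eₙ and with the property that any n linearly independent elements of 𝒰 form a ℤ-basis of ℤⁿ. Then every element u of 𝒰 has all its coordinates in {−1, 0, 1}; in particular 𝒰 is finite. -/
/-!
Replacing the `i`-th standard basis vector by `u ∈ 𝒰` gives `n` members of `𝒰` whose matrix is
the identity with its `i`-th column replaced by `u`, of determinant `u i`. So either `u i = 0`,
or these vectors are linearly independent, hence a `ℤ`-basis, and `u i = ±1`.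
-/

open Matrix

theorem Matrix.det_one_updateCol {n R : Type*} [Fintype n] [DecidableEq n] [CommRing R]
    (i : n) (u : n → R) : ((1 : Matrix n n R).updateCol i u).det = u i := by
  rw [← cramer_apply, cramer_one]
  rfl

theorem Matrix.transpose_of_update_single {n R : Type*} [DecidableEq n] [Zero R] [One R]
    (i : n) (u : n → R) :
    (of (Function.update (fun k => (Pi.single k 1 : n → R)) i u))ᵀ =
      (1 : Matrix n n R).updateCol i u := by
  ext a k
  by_cases hk : k = i
  · subst hk
    simp
  · simp [hk, one_apply, Pi.single_apply]

theorem apply_eq_zero_or_isUnit_of_det_isUnit {ι R : Type*} [Fintype ι] [DecidableEq ι]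
    [CommRing R] (𝒰 : Set (ι → R)) (hbasis : ∀ i, Pi.single i 1 ∈ 𝒰)
    (hunit : ∀ v : ι → ι → R, (∀ k, v k ∈ 𝒰) → (of v)ᵀ.det ≠ 0 → IsUnit (of v)ᵀ.det)
    {u : ι → R} (hu : u ∈ 𝒰) (i : ι) : u i = 0 ∨ IsUnit (u i) := by
  set v := Function.update (fun k => (Pi.single k 1 : ι → R)) i u
  have hv : ∀ k, v k ∈ 𝒰 := by
    intro k
    by_cases hk : k = i
    · simpa [v, hk] using hu
    · simpa [v, hk] using hbasis k
  have hdet : (of v)ᵀ.det = u i := by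
    rw [transpose_of_update_single, det_one_updateCol]
  rw [← hdet]
  exact or_iff_not_imp_left.2 (hunit v hv)

theorem stmt_4_general (n : ℕ) (𝒰 : Set (Fin n → ℤ))
    (hbasis : ∀ i : Fin n, (fun j => if j = i then (1 : ℤ) else 0) ∈ 𝒰)
    (hZbasis : ∀ v : Fin n → (Fin n → ℤ), (∀ k, v k ∈ 𝒰) →
      (Matrix.of fun i k => v k i).det ≠ 0 →
      (Matrix.of fun i k => v k i).det = 1 ∨ (Matrix.of fun i k => v k i).det = -1) :
    (∀ u ∈ 𝒰, ∀ i, u i ∈ ({-1, 0, 1} : Set ℤ)) ∧ 𝒰.Finite := by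
  have hsingle : ∀ i : Fin n, Pi.single i 1 ∈ 𝒰 := fun i => by
    convert hbasis i using 1
    ext j
    exact Pi.single_apply i 1 j
  have hcoord : ∀ u ∈ 𝒰, ∀ i, u i ∈ ({-1, 0, 1} : Set ℤ) := by
    intro u hu i
    rcases apply_eq_zero_or_isUnit_of_det_isUnit 𝒰 hsingle
      (fun v hv h => Int.isUnit_iff.2 (hZbasis v hv h)) hu i with h | h
    · simp [h]
    · rcases Int.isUnit_iff.1 h with h | h <;> simp [h]
  exact ⟨hcoord, (Set.Finite.pi fun _ => Set.toFinite _).subset fun u hu i _ => hcoord u hu i⟩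

/-- If `𝒰 ⊆ ℤⁿ` consists of primitive vectors, contains the standard basis,
and any `n` linearly independent members form a `ℤ`-basis of `ℤⁿ` (the matrix with
those columns has determinant `±1`), then every `u ∈ 𝒰` has coordinates in
`{-1,0,1}`; in particular `𝒰` is finite. -/
theorem stmt_4 (n : ℕ) (𝒰 : Set (Fin n → ℤ))
    (hprim : ∀ u ∈ 𝒰, Finset.univ.gcd u = 1)
    (hbasis : ∀ i : Fin n, (fun j => if j = i then (1 : ℤ) else 0) ∈ 𝒰)
    (hZbasis : ∀ v : Fin n → (Fin n → ℤ), (∀ k, v k ∈ 𝒰) →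
      (Matrix.of fun i k => v k i).det ≠ 0 →
      (Matrix.of fun i k => v k i).det = 1 ∨ (Matrix.of fun i k => v k i).det = -1) :
    (∀ u ∈ 𝒰, ∀ i, u i ∈ ({-1, 0, 1} : Set ℤ)) ∧ 𝒰.Finite :=
  stmt_4_general n 𝒰 hbasis hZbasis
end

section
/- Let 𝒰 ⊆ ℤⁿ be a set of primitive vectors spanning ℝⁿ such that whenever v₁,…,vₙ ∈ 𝒰 are linearly independent they form a ℤ-basis of ℤⁿ. Then 𝒰 is finite. -/
/-!
Real spanning gives `n` members of `𝒰` forming an integer matrix `M` with `det M ≠ 0`. For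
`u ∈ 𝒰`, the `k`-th Cramer coordinate `det (M with column k replaced by u)` is the determinant
of `n` members of `𝒰`, hence lies in `{-1, 0, 1}`. Since `cramer M` is injective, `𝒰` embeds
into the finite cube `{-1, 0, 1}ⁿ`.
-/

open Matrix Submodule

theorem Matrix.cramer_injective {ι R : Type*} [Fintype ι] [DecidableEq ι] [CommRing R]
    [IsDomain R] {A : Matrix ι ι R} (hA : A.det ≠ 0) : Function.Injective (cramer A) := by
  intro b b' h
  have := congrArg (A *ᵥ ·) h
  simp only [mulVec_cramer] at this
  exact smul_right_injective _ hA this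

theorem Matrix.updateCol_of_cols {m ι R : Type*} [DecidableEq ι] (v : ι → m → R) (k : ι)
    (u : m → R) :
    (Matrix.of fun i k => v k i).updateCol k u =
      Matrix.of fun i k' => Function.update v k u k' i := by
  ext i k'
  by_cases h : k' = k <;> simp [Function.update_apply, h]

theorem exists_det_ne_zero_of_span_eq_top {n : ℕ} (S : Set (Fin n → ℤ))
    (hS : span ℝ ((fun u : Fin n → ℤ => fun i => (u i : ℝ)) '' S) = ⊤) :
    ∃ v : Fin n → Fin n → ℤ, (∀ k, v k ∈ S) ∧ (Matrix.of fun i k => v k i).det ≠ 0 := by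
  have := exists_fun_fin_finrank_span_eq ℝ ((fun u : Fin n → ℤ => fun i => (u i : ℝ)) '' S)
  rw [hS, finrank_top, Module.finrank_fin_fun] at this
  obtain ⟨f, hfS, -, hf⟩ := this
  choose v hvS hvf using hfS
  refine ⟨v, hvS, fun h0 => ?_⟩
  have hcols : (Matrix.of fun i k => f k i).col = f := rfl
  rw [← hcols, linearIndependent_cols_iff_isUnit, isUnit_iff_isUnit_det] at hf
  have hmap : (Matrix.of fun i k => f k i) =
      (Int.castRingHom ℝ).mapMatrix (Matrix.of fun i k => v k i) := by
    ext i k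
    simp [← hvf k]
  rw [hmap, ← RingHom.map_det, h0, map_zero] at hf
  exact not_isUnit_zero hf

theorem stmt_5_general (n : ℕ) (𝒰 : Set (Fin n → ℤ))
    (hspan : Submodule.span ℝ ((fun u : Fin n → ℤ => fun i => (u i : ℝ)) '' 𝒰) = ⊤)
    (hZbasis : ∀ v : Fin n → (Fin n → ℤ), (∀ k, v k ∈ 𝒰) →
      (Matrix.of fun i k => v k i).det ≠ 0 →
      (Matrix.of fun i k => v k i).det = 1 ∨ (Matrix.of fun i k => v k i).det = -1) :
    𝒰.Finite := by
  obtain ⟨v, hv𝒰, hdet⟩ := exists_det_ne_zero_of_span_eq_top 𝒰 hspan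
  have hcramer : ∀ u ∈ 𝒰, ∀ k,
      cramer (Matrix.of fun i k => v k i) u k ∈ ({-1, 0, 1} : Set ℤ) := by
    intro u hu k
    have hupdate𝒰 : ∀ k', Function.update v k u k' ∈ 𝒰 :=
      (Function.forall_update_iff v (p := fun _ w => w ∈ 𝒰)).2 ⟨hu, fun k' _ => hv𝒰 k'⟩
    rw [cramer_apply, updateCol_of_cols]
    by_cases h0 : (Matrix.of fun i k' => Function.update v k u k' i).det = 0
    · simp [h0]
    · rcases hZbasis _ hupdate𝒰 h0 with h | h <;> simp [h]
  have hcube : (Set.univ.pi fun _ : Fin n => ({-1, 0, 1} : Set ℤ)).Finite :=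
    Set.Finite.pi fun _ => Set.toFinite _
  exact (hcube.preimage (cramer_injective hdet).injOn).subset fun u hu k _ => hcramer u hu k

/-- If `𝒰 ⊆ ℤⁿ` consists of primitive vectors whose real span is all of `ℝⁿ`,
and any `n` linearly independent members form a `ℤ`-basis of `ℤⁿ`, then
`𝒰` is finite. -/
theorem stmt_5 (n : ℕ) (𝒰 : Set (Fin n → ℤ))
    (hprim : ∀ u ∈ 𝒰, Finset.univ.gcd u = 1)
    (hspan : Submodule.span ℝ ((fun u : Fin n → ℤ => fun i => (u i : ℝ)) '' 𝒰) = ⊤)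
    (hZbasis : ∀ v : Fin n → (Fin n → ℤ), (∀ k, v k ∈ 𝒰) →
      (Matrix.of fun i k => v k i).det ≠ 0 →
      (Matrix.of fun i k => v k i).det = 1 ∨ (Matrix.of fun i k => v k i).det = -1) :
    𝒰.Finite :=
  stmt_5_general n 𝒰 hspan hZbasis
end
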